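/- Let A be a finite nonempty index set and r_s ∈ [0,1) for each s ∈ A, and let r̄ = (Σ_{s∈A} r_s/(1−r_s)) / (1 + Σ_{s∈A} r_s/(1−r_s)). Then r̄ ≥ r_{s₀} for every s₀ ∈ A. In particular, if any single sensor's existence probability is high then the complementarily fused existence probability is at least as high. -/

import Mathlib

/-! With odds `x_s = r_s / (1 - r_s)`, the fused value is `T / (1 + T)` for the total odds
`T = ∑ x_s`, while each `r_s` is recovered as `x_s / (1 + x_s)`. Since the odds are nonnegative,
`x_{s₀} ≤ T`, and `t ↦ t / (1 + t)` is monotone on `[0, ∞)`. -/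

open Finset

lemma monotoneOn_div_one_add : MonotoneOn (fun t : ℝ => t / (1 + t)) (Set.Ici 0) := by
  intro a (ha : 0 ≤ a) b (hb : 0 ≤ b) hab
  rw [div_le_div_iff₀ (by linarith) (by linarith)]
  linarith

lemma div_one_sub_div_one_add_div_one_sub {r : ℝ} (hr : r ≠ 1) :
    r / (1 - r) / (1 + r / (1 - r)) = r := by
  have h : 1 - r ≠ 0 := sub_ne_zero.mpr hr.symm
  field_simp
  ring

theorem acf_fused_existence_ge_individual_general
    {ι : Type*} (A : Finset ι)
    (r : ι → ℝ) (hr : ∀ s ∈ A, 0 ≤ r s ∧ r s < 1)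
    (rbar : ℝ)
    (hrbar : rbar = (∑ s ∈ A, r s / (1 - r s)) / (1 + ∑ s ∈ A, r s / (1 - r s))) :
    ∀ s₀ ∈ A, r s₀ ≤ rbar := by
  intro s₀ hs₀
  have hodds : ∀ s ∈ A, 0 ≤ r s / (1 - r s) := fun s hs =>
    div_nonneg (hr s hs).1 (sub_nonneg.mpr (hr s hs).2.le)
  calc r s₀ = r s₀ / (1 - r s₀) / (1 + r s₀ / (1 - r s₀)) :=
        (div_one_sub_div_one_add_div_one_sub (hr s₀ hs₀).2.ne).symm
    _ ≤ (∑ s ∈ A, r s / (1 - r s)) / (1 + ∑ s ∈ A, r s / (1 - r s)) :=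
        monotoneOn_div_one_add (hodds s₀ hs₀) (sum_nonneg hodds) (single_le_sum hodds hs₀)
    _ = rbar := hrbar.symm

/-- ACF fused existence probability dominates each individual sensor's
probability: for a finite nonempty active-sensor set `A` with `r s ∈ [0,1)`,
the fused value `r̄ = (Σ r_s/(1−r_s)) / (1 + Σ r_s/(1−r_s))` satisfies
`r̄ ≥ r s₀` for every `s₀ ∈ A`. -/
theorem acf_fused_existence_ge_individual
    {ι : Type*} (A : Finset ι) (hA : A.Nonempty)
    (r : ι → ℝ) (hr : ∀ s ∈ A, 0 ≤ r s ∧ r s < 1)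
    (rbar : ℝ)
    (hrbar : rbar = (∑ s ∈ A, r s / (1 - r s)) / (1 + ∑ s ∈ A, r s / (1 - r s))) :
    ∀ s₀ ∈ A, r s₀ ≤ rbar :=
  acf_fused_existence_ge_individual_general A r hr rbar hrbar
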